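/- Let V be a 3-dimensional vector space over a field K of characteristic 0 with basis (e, f, h). Define brackets [h,f]_t = −2f − 2tf, [h,e]_t = 2e, [e,f]_t = h + (t/2)h (skew-symmetric), and α_t(e) = ((2+t)/(2(1+t)))e, α_t(h) = h, α_t(f) = f + (t/2)f, over the field K(t) (or for any scalar t with 1+t ≠ 0). Then (V, [·,·]_t, α_t) is a Hom-Lie algebra, i.e. the Hom-Jacobi identity [α_t(x),[y,z]_t]_t + [α_t(y),[z,x]_t]_t + [α_t(z),[x,y]_t]_t = 0 holds for all x, y, z. -/

import Mathlib

/-- The Jackson sl₂ bracket in coordinates with respect to the basis `(e, f, h)`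
(indices `0, 1, 2`): `[h,f]_t = -2f - 2tf`, `[h,e]_t = 2e`, `[e,f]_t = h + (t/2)h`. -/
def jacksonBracket {K : Type*} [Field K] (t : K) (u v : Fin 3 → K) : Fin 3 → K :=
  ![-2 * (u 0 * v 2 - u 2 * v 0),
    (2 + 2 * t) * (u 1 * v 2 - u 2 * v 1),
    (1 + t / 2) * (u 0 * v 1 - u 1 * v 0)]

/-- The Jackson sl₂ twisting map: `α_t(e) = ((2+t)/(2(1+t))) e`, `α_t(f) = f + (t/2) f`,
`α_t(h) = h`. -/
def jacksonAlpha {K : Type*} [Field K] (t : K) (u : Fin 3 → K) : Fin 3 → K :=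
  ![(2 + t) / (2 * (1 + t)) * u 0, (1 + t / 2) * u 1, u 2]

set_option maxHeartbeats 1000000 in
/-- Jackson sl₂ is a Hom-Lie algebra: the bracket is skew-symmetric and the
Hom-Jacobi identity holds. -/
theorem jackson_sl2_homLie
    {K : Type*} [Field K] [CharZero K] (t : K) (ht : 1 + t ≠ 0) :
    (∀ u v : Fin 3 → K, jacksonBracket t u v = - jacksonBracket t v u)
    ∧ (∀ u v w : Fin 3 → K,
        jacksonBracket t (jacksonAlpha t u) (jacksonBracket t v w)
          + jacksonBracket t (jacksonAlpha t v) (jacksonBracket t w u)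
          + jacksonBracket t (jacksonAlpha t w) (jacksonBracket t u v) = 0) := by
  have h2 : (2 : K) ≠ 0 := two_ne_zero
  constructor
  · intro u v
    funext i
    fin_cases i <;> simp [jacksonBracket] <;> ring
  · intro u v w
    funext i
    have hd : (2 * (1 + t) : K) ≠ 0 := mul_ne_zero h2 ht
    fin_cases i <;>
      simp only [jacksonBracket, jacksonAlpha, Pi.add_apply, Pi.zero_apply,
        Matrix.cons_val_zero, Matrix.cons_val_one, Matrix.head_cons,
        Matrix.cons_val_two, Matrix.tail_cons, Fin.zero_eta, Fin.mk_one, Fin.reduceFinMk] <;>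
    · field_simp
      ring
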